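/- arXiv:math/0602444 — 3 statements merged into one kernel-verified Lean document; each statement's English description precedes it below -/
import Mathlib

section
/- Let K be a flag simplicial complex, let n ≥ 2, and let ∂Δ^n be the boundary of the standard n-simplex. Then there is no degree-preserving surjective algebra homomorphism φ : Λ(K) → Λ(∂Δ^n) of exterior face algebras over Z/2Z whose kernel is generated, as an ideal, by homogeneous elements of degrees 1 and 2. -/
open MvPolynomial

def IsSimplicialComplex {V : Type*} (S : Set (Finset V)) : Prop :=
  ∀ s ∈ S, ∀ t ⊆ s, t ∈ S

def IsFlag {V : Type*} [DecidableEq V] (S : Set (Finset V)) : Prop :=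
  ∀ s : Finset V, (∀ v ∈ s, ∀ w ∈ s, v ≠ w → ({v, w} : Finset V) ∈ S) → s ∈ S

/-- The boundary of the standard `n`-simplex: faces are all proper subsets of `Fin (n+1)`. -/
def boundarySimplex (n : ℕ) : Set (Finset (Fin (n + 1))) :=
  {s | s ≠ Finset.univ}

/-- Defining ideal of the exterior face algebra over `ℤ/2ℤ` (characteristic-2 description). -/
noncomputable def extIdeal (m : ℕ) (S : Set (Finset (Fin m))) :
    Ideal (MvPolynomial (Fin m) (ZMod 2)) :=
  Ideal.span ({p | ∃ i : Fin m, p = X i ^ 2} ∪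
    {p | ∃ s : Finset (Fin m), s ∉ S ∧ p = ∏ i ∈ s, X i})

/-- The exterior face algebra `Λ(K)` over `ℤ/2ℤ`. -/
abbrev ExtFaceAlgebra (m : ℕ) (S : Set (Finset (Fin m))) : Type :=
  MvPolynomial (Fin m) (ZMod 2) ⧸ extIdeal m S

/-- Homogeneous degree-`k` part of the exterior face algebra. -/
noncomputable def degreePiece (m : ℕ) (S : Set (Finset (Fin m))) (k : ℕ) :
    Submodule (ZMod 2) (ExtFaceAlgebra m S) :=
  (MvPolynomial.homogeneousSubmodule (Fin m) (ZMod 2) k).map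
    (Ideal.Quotient.mkₐ (ZMod 2) (extIdeal m S)).toLinearMap

/-- An algebra homomorphism of exterior face algebras is degree-preserving if it maps
homogeneous elements of degree `k` to homogeneous elements of degree `k`. -/
def DegreePreserving {m₁ m₂ : ℕ} {S₁ : Set (Finset (Fin m₁))} {S₂ : Set (Finset (Fin m₂))}
    (φ : ExtFaceAlgebra m₁ S₁ →ₐ[ZMod 2] ExtFaceAlgebra m₂ S₂) : Prop :=
  ∀ k : ℕ, (degreePiece m₁ S₁ k).map φ.toLinearMap ≤ degreePiece m₂ S₂ k

/-!
A degree-preserving `φ` is induced by a graded map `τ = aeval g` of polynomial rings sending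
variables to linear forms. Face ideals are monomial ideals, and every set of at most `n`
vertices is a face of `∂Δⁿ`, so in degrees `≤ n` the relations of `Λ(∂Δⁿ)` are just the
squares, i.e. the ideal `extIdeal (n + 1) Set.univ` of the exterior algebra. As `K` is flag,
its face ideal is generated in degree 2; together with the generators of `ker φ` in degrees
1 and 2 this shows that `τ` maps every lift of an element of `ker φ` into the ideal of
squares. By surjectivity the variables `X i` lift to linear forms `ℓ i` modulo squares; then
`∏ ℓ i` lies in the kernel, since `∏ X i` is the monomial of the missing top face of `∂Δⁿ`,
while `τ (∏ ℓ i) ≡ ∏ X i` is not a multiple of a square.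
-/

section FaceIdeal

variable {N : ℕ} {S : Set (Finset (Fin N))}

lemma sum_single_one_le_iff {s : Finset (Fin N)} {d : Fin N →₀ ℕ} :
    ∑ i ∈ s, Finsupp.single i 1 ≤ d ↔ s ⊆ d.support := by
  simp only [Finsupp.le_def, Finsupp.finsetSum_apply, Finsupp.single_apply, Finset.sum_ite_eq',
    Finset.subset_iff, Finsupp.mem_support_iff]
  refine forall_congr' fun i => ?_
  split_ifs <;> simp_all [Nat.one_le_iff_ne_zero]

lemma extIdeal_eq_span_monomial :
    extIdeal N S = Ideal.span ((fun d => monomial d (1 : ZMod 2)) ''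
      ({d | ∃ i, d = Finsupp.single i 2} ∪ {d | ∃ s ∉ S, d = ∑ i ∈ s, Finsupp.single i 1})) := by
  rw [extIdeal, Set.image_union]
  congr 2 <;> ext p
  · simp [X_pow_eq_monomial, eq_comm]
  · simp [X, monomial_sum_one, eq_comm]

theorem mem_extIdeal_iff {p : MvPolynomial (Fin N) (ZMod 2)} :
    p ∈ extIdeal N S ↔ ∀ d ∈ p.support, (∃ i, 2 ≤ d i) ∨ ∃ s ∉ S, s ⊆ d.support := by
  rw [extIdeal_eq_span_monomial, mem_ideal_span_monomial_image]
  refine forall₂_congr fun d _ => ?_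
  simp [or_and_right, exists_or, Finsupp.single_le_iff, sum_single_one_le_iff]

lemma card_support_eq_degree {d : Fin N →₀ ℕ} (hd : ∀ i, d i ≤ 1) :
    d.support.card = d.degree := by
  rw [Finsupp.degree_apply, Finset.card_eq_sum_ones]
  refine Finset.sum_congr rfl fun i hi => ?_
  have := Finsupp.mem_support_iff.mp hi
  have := hd i
  omega

lemma extIdeal_univ_le (S : Set (Finset (Fin N))) : extIdeal N Set.univ ≤ extIdeal N S :=
  Ideal.span_mono (Set.union_subset_union_right _ fun _ ⟨s, hs, _⟩ => absurd (Set.mem_univ s) hs)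

theorem homogeneousComponent_mem_extIdeal_univ {k : ℕ}
    (hk : ∀ s : Finset (Fin N), s.card ≤ k → s ∈ S)
    {p : MvPolynomial (Fin N) (ZMod 2)} (hp : p ∈ extIdeal N S) :
    homogeneousComponent k p ∈ extIdeal N Set.univ := by
  rw [mem_extIdeal_iff] at hp ⊢
  intro d hd
  rw [support_homogeneousComponent, Finset.mem_filter] at hd
  rcases hp d hd.1 with hsq | ⟨s, hs, hsd⟩
  · exact Or.inl hsq
  refine Or.inl (by_contra fun hsq => hs (hk s ?_))
  simp only [not_exists, not_le] at hsq
  calc s.card ≤ d.support.card := Finset.card_le_card hsd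
    _ = k := (card_support_eq_degree fun i => Nat.lt_succ_iff.mp (hsq i)).trans hd.2

theorem prod_X_notMem_extIdeal_univ :
    ∏ i, (X i : MvPolynomial (Fin N) (ZMod 2)) ∉ extIdeal N Set.univ := by
  rw [mem_extIdeal_iff]
  simp [X, ← monomial_sum_one]

theorem IsFlag.extIdeal_le_span (hS : IsFlag S) :
    extIdeal N S ≤ Ideal.span {p | p ∈ extIdeal N S ∧ p.IsHomogeneous 2} := by
  refine Ideal.span_le.mpr ?_
  rintro _ (⟨i, rfl⟩ | ⟨s, hs, rfl⟩)
  · exact Ideal.subset_span ⟨Ideal.subset_span (Or.inl ⟨i, rfl⟩), (isHomogeneous_X _ i).pow 2⟩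
  -- a non-face of a flag complex contains a non-edge `{v, w}`, so its monomial is a
  -- multiple of `X v * X w`
  obtain ⟨v, hv, w, hw, hvw, hedge⟩ : ∃ v ∈ s, ∃ w ∈ s, v ≠ w ∧ {v, w} ∉ S := by
    by_contra! h
    exact hs (hS s h)
  have hw' : w ∈ s.erase v := Finset.mem_erase.mpr ⟨hvw.symm, hw⟩
  rw [← Finset.mul_prod_erase s _ hv, ← Finset.mul_prod_erase _ _ hw', ← mul_assoc]
  refine Ideal.mul_mem_right _ _ (Ideal.subset_span ⟨?_, ?_⟩)
  · exact Ideal.subset_span (Or.inr ⟨{v, w}, hedge, (Finset.prod_pair hvw).symm⟩)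
  · exact (isHomogeneous_X _ v).mul (isHomogeneous_X _ w)

end FaceIdeal

lemma prod_X_mem_extIdeal_boundarySimplex (n : ℕ) :
    ∏ i, (X i : MvPolynomial (Fin (n + 1)) (ZMod 2)) ∈ extIdeal (n + 1) (boundarySimplex n) :=
  Ideal.subset_span (Or.inr ⟨Finset.univ, by simp [boundarySimplex], rfl⟩)

lemma mem_boundarySimplex_of_card_le {n : ℕ} {s : Finset (Fin (n + 1))} (hs : s.card ≤ n) :
    s ∈ boundarySimplex n := by
  rintro rfl
  simp at hs

lemma homogeneousComponent_aeval {R σ τ : Type*} [CommSemiring R] {g : σ → MvPolynomial τ R}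
    (hg : ∀ i, (g i).IsHomogeneous 1) (k : ℕ) (p : MvPolynomial σ R) :
    homogeneousComponent k (aeval g p) = aeval g (homogeneousComponent k p) := by
  induction p using MvPolynomial.induction_on' with
  | monomial d c =>
    have hmon : (monomial d c).IsHomogeneous d.degree := isHomogeneous_monomial c rfl
    have himg := hmon.aeval g hg
    rw [one_mul] at himg
    rw [homogeneousComponent_of_mem himg, homogeneousComponent_of_mem hmon]
    split_ifs <;> simp
  | add p q hp hq => simp only [map_add, hp, hq]

lemma mem_degreePiece_iff {N k : ℕ} {S : Set (Finset (Fin N))} {a : ExtFaceAlgebra N S} :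
    a ∈ degreePiece N S k ↔ ∃ q, q.IsHomogeneous k ∧ Ideal.Quotient.mk _ q = a := by
  simp only [degreePiece, Submodule.mem_map, mem_homogeneousSubmodule]
  rfl

section Lift

variable {m₁ m₂ : ℕ} {S₁ : Set (Finset (Fin m₁))} {S₂ : Set (Finset (Fin m₂))}
  {φ : ExtFaceAlgebra m₁ S₁ →ₐ[ZMod 2] ExtFaceAlgebra m₂ S₂}

theorem DegreePreserving.exists_lift (hφ : DegreePreserving φ) :
    ∃ g : Fin m₁ → MvPolynomial (Fin m₂) (ZMod 2), (∀ v, (g v).IsHomogeneous 1) ∧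
      ∀ p, φ (Ideal.Quotient.mk _ p) = Ideal.Quotient.mk _ (aeval g p) := by
  have hX (v : Fin m₁) := mem_degreePiece_iff.mp <| hφ 1 <| Submodule.mem_map_of_mem <|
    mem_degreePiece_iff.mpr ⟨X v, isHomogeneous_X _ v, rfl⟩
  choose g hg hgX using hX
  refine ⟨g, hg, fun p => ?_⟩
  have : φ.comp (Ideal.Quotient.mkₐ _ _) = (Ideal.Quotient.mkₐ _ _).comp (aeval g) :=
    algHom_ext fun v => by simp [hgX]
  exact DFunLike.congr_fun this p

theorem exists_aeval_sub_X_mem_of_surjective (hsurj : Function.Surjective φ)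
    {g : Fin m₁ → MvPolynomial (Fin m₂) (ZMod 2)} (hg : ∀ v, (g v).IsHomogeneous 1)
    (hφg : ∀ p, φ (Ideal.Quotient.mk _ p) = Ideal.Quotient.mk _ (aeval g p))
    (hS₂ : ∀ s : Finset (Fin m₂), s.card ≤ 1 → s ∈ S₂) (i : Fin m₂) :
    ∃ ℓ : MvPolynomial (Fin m₁) (ZMod 2), aeval g ℓ - X i ∈ extIdeal m₂ Set.univ := by
  obtain ⟨a, ha⟩ := hsurj (Ideal.Quotient.mk _ (X i))
  obtain ⟨q, rfl⟩ := Ideal.Quotient.mk_surjective a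
  rw [hφg, Ideal.Quotient.eq] at ha
  refine ⟨homogeneousComponent 1 q, ?_⟩
  have := homogeneousComponent_mem_extIdeal_univ hS₂ ha
  rwa [map_sub, homogeneousComponent_aeval hg, homogeneousComponent_eq_self (isHomogeneous_X _ i)]
    at this

end Lift

section Boundary

variable {m n : ℕ} {S : Set (Finset (Fin m))}
  {φ : ExtFaceAlgebra m S →ₐ[ZMod 2] ExtFaceAlgebra (n + 1) (boundarySimplex n)}
  {g : Fin m → MvPolynomial (Fin (n + 1)) (ZMod 2)}

theorem aeval_mem_extIdeal_univ_of_isHomogeneous (hg : ∀ v, (g v).IsHomogeneous 1)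
    (hφg : ∀ p, φ (Ideal.Quotient.mk _ p) = Ideal.Quotient.mk _ (aeval g p))
    {k : ℕ} (hk : k ≤ n) {p : MvPolynomial (Fin m) (ZMod 2)} (hp : p.IsHomogeneous k)
    (hφp : φ (Ideal.Quotient.mk _ p) = 0) :
    aeval g p ∈ extIdeal (n + 1) Set.univ := by
  rw [hφg, Ideal.Quotient.eq_zero_iff_mem] at hφp
  have hgp := hp.aeval g hg
  rw [one_mul] at hgp
  rw [← homogeneousComponent_eq_self hgp]
  exact homogeneousComponent_mem_extIdeal_univ
    (fun s hs => mem_boundarySimplex_of_card_le (hs.trans hk)) hφp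

theorem aeval_mem_extIdeal_univ_of_mem_ker (hg : ∀ v, (g v).IsHomogeneous 1)
    (hφg : ∀ p, φ (Ideal.Quotient.mk _ p) = Ideal.Quotient.mk _ (aeval g p))
    (hflag : IsFlag S) (hn : 2 ≤ n) {G : Set (ExtFaceAlgebra m S)}
    (hG : ∀ a ∈ G, a ∈ degreePiece m S 1 ∨ a ∈ degreePiece m S 2)
    (hker : RingHom.ker φ = Ideal.span G) {p : MvPolynomial (Fin m) (ZMod 2)}
    (hφp : φ (Ideal.Quotient.mk _ p) = 0) :
    aeval g p ∈ extIdeal (n + 1) Set.univ := by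
  set J := Ideal.comap (aeval (R := ZMod 2) g) (extIdeal (n + 1) Set.univ)
  have hSJ : extIdeal m S ≤ J := hflag.extIdeal_le_span.trans <| Ideal.span_le.mpr
    fun q ⟨hq, hq2⟩ => aeval_mem_extIdeal_univ_of_isHomogeneous hg hφg hn hq2
      (by rw [Ideal.Quotient.eq_zero_iff_mem.mpr hq, map_zero])
  have hGJ : RingHom.ker φ ≤ J.map (Ideal.Quotient.mk _) := by
    rw [hker, Ideal.span_le]
    intro a ha
    have hφa : φ a = 0 := by
      rw [← RingHom.mem_ker, hker]
      exact Ideal.subset_span ha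
    obtain ⟨k, hk, q, hq, rfl⟩ :
        ∃ k ≤ 2, ∃ q, q.IsHomogeneous k ∧ Ideal.Quotient.mk _ q = a := by
      rcases hG a ha with h | h
      exacts [⟨1, by omega, mem_degreePiece_iff.mp h⟩, ⟨2, le_rfl, mem_degreePiece_iff.mp h⟩]
    exact Ideal.mem_map_of_mem _
      (aeval_mem_extIdeal_univ_of_isHomogeneous hg hφg (hk.trans hn) hq hφa)
  exact (Ideal.mem_quotient_iff_mem hSJ).mp (hGJ hφp)

end Boundary

theorem no_degree_preserving_surjection_onto_boundary_general
    (m : ℕ) (S : Set (Finset (Fin m)))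
    (hflag : IsFlag S)
    (n : ℕ) (hn : 2 ≤ n) :
    ¬ ∃ φ : ExtFaceAlgebra m S →ₐ[ZMod 2] ExtFaceAlgebra (n + 1) (boundarySimplex n),
      Function.Surjective φ ∧ DegreePreserving φ ∧
      ∃ G : Set (ExtFaceAlgebra m S),
        (∀ g ∈ G, g ∈ degreePiece m S 1 ∨ g ∈ degreePiece m S 2) ∧
        RingHom.ker φ = Ideal.span G := by
  rintro ⟨φ, hsurj, hdeg, G, hG, hker⟩
  obtain ⟨g, hg, hφg⟩ := hdeg.exists_lift
  choose ℓ hℓ using exists_aeval_sub_X_mem_of_surjective hsurj hg hφg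
    fun s hs => mem_boundarySimplex_of_card_le (hs.trans (by omega))
  have hprod : aeval g (∏ i, ℓ i) - ∏ i, X i ∈ extIdeal (n + 1) Set.univ := by
    rw [← Ideal.Quotient.eq, map_prod, map_prod, map_prod]
    exact Finset.prod_congr rfl fun i _ => Ideal.Quotient.eq.mpr (hℓ i)
  have hφz : φ (Ideal.Quotient.mk _ (∏ i, ℓ i)) = 0 := by
    rw [hφg, Ideal.Quotient.eq_zero_iff_mem]
    exact (Submodule.sub_mem_iff_left _ (prod_X_mem_extIdeal_boundarySimplex n)).mp
      (extIdeal_univ_le _ hprod)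
  have hz := aeval_mem_extIdeal_univ_of_mem_ker hg hφg hflag hn hG hker hφz
  exact prod_X_notMem_extIdeal_univ ((Submodule.sub_mem_iff_right _ hz).mp hprod)

/-- If `K` is a flag complex and `n ≥ 2`, there is no degree-preserving surjective algebra
homomorphism `Λ(K) → Λ(∂Δⁿ)` whose kernel is generated by homogeneous elements of degrees
1 and 2. -/
theorem no_degree_preserving_surjection_onto_boundary
    (m : ℕ) (S : Set (Finset (Fin m)))
    (hcomplex : IsSimplicialComplex S) (hflag : IsFlag S)
    (n : ℕ) (hn : 2 ≤ n) :
    ¬ ∃ φ : ExtFaceAlgebra m S →ₐ[ZMod 2] ExtFaceAlgebra (n + 1) (boundarySimplex n),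
      Function.Surjective φ ∧ DegreePreserving φ ∧
      ∃ G : Set (ExtFaceAlgebra m S),
        (∀ g ∈ G, g ∈ degreePiece m S 1 ∨ g ∈ degreePiece m S 2) ∧
        RingHom.ker φ = Ideal.span G :=
  no_degree_preserving_surjection_onto_boundary_general m S hflag n hn
end

section
/- Let T be a finite tree with a planar embedding and ordered vertices as above. If c is a critical cell of UD^n(T) and [c'] ≤ [c] in the face-induced partial order on equivalence classes, then c' is equivalent to some critical cell. -/
attribute [local instance] Classical.propDecidable

/-- `u` is a descendant of `v` in the rooted tree with parent function `p`. -/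
def Desc {m : ℕ} (p : Fin (m + 1) → Fin (m + 1)) (u v : Fin (m + 1)) : Prop :=
  ∃ k : ℕ, p^[k] u = v

/-- A finite tree, rooted at the degree-one vertex `0`, whose vertices `Fin (m + 1)` are ordered
by first encounter in a depth-first traversal induced by a planar embedding: each
non-root vertex `v` has a parent `p v < v`, the root is fixed, the set of descendants of
any vertex is an interval (the characteristic property of depth-first orders), and the
root has degree one (its only child is the vertex `1`). -/
structure OrderedTree (m : ℕ) where
  /-- the parent function; the edges of the tree are the pairs `(v, p v)`, `v ≠ 0` -/
  p : Fin (m + 1) → Fin (m + 1)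
  root_fix : p 0 = 0
  parent_lt : ∀ v : Fin (m + 1), v ≠ 0 → p v < v
  dfs_interval : ∀ v u w : Fin (m + 1), Desc p u v → v ≤ w → w ≤ u → Desc p w v
  root_deg_one : ∀ v : Fin (m + 1), v ≠ 0 → p v = 0 → v = 1

/-- A cell of the discretized unordered configuration space `UD^n(T)` of the tree `T`:
`n` closed cells (edges and vertices) with pairwise disjoint closures.  An edge is
recorded by its larger endpoint `e` (so the edge is `[p e, e]`, with initial vertex
`ι(e) = e` and terminal vertex `τ(e) = p e`). -/
structure TCell (m n : ℕ) (T : OrderedTree m) where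
  /-- the edges of the cell, each recorded by its child (= larger) endpoint -/
  edges : Finset (Fin (m + 1))
  /-- the vertices of the cell -/
  verts : Finset (Fin (m + 1))
  edges_ne_root : ∀ e ∈ edges, e ≠ 0
  card_eq : edges.card + verts.card = n
  vert_not_on_edge : ∀ e ∈ edges, ∀ v ∈ verts, v ≠ e ∧ v ≠ T.p e
  edges_disjoint : ∀ e ∈ edges, ∀ e' ∈ edges, e ≠ e' → e ≠ T.p e' ∧ T.p e ≠ T.p e'

/-- A vertex `v` of the cell `c` is blocked if `v` is the root, or if the edge of `T`
whose initial (larger) endpoint is `v` meets another member of `c`, i.e. the parent of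
`v` is a vertex of `c` or lies on an edge of `c`. -/
def Blocked {m n : ℕ} {T : OrderedTree m} (c : TCell m n T) (v : Fin (m + 1)) : Prop :=
  v = 0 ∨ T.p v ∈ c.verts ∨ T.p v ∈ c.edges ∨ ∃ e ∈ c.edges, T.p e = T.p v

/-- An edge `e` of the cell `c` is disrespectful if some vertex `v` of `c` adjacent to
`τ(e) = p e` satisfies `τ(e) < v < ι(e) = e`; otherwise it is respectful. -/
def Disrespectful {m n : ℕ} {T : OrderedTree m} (c : TCell m n T) (e : Fin (m + 1)) : Prop :=
  ∃ v ∈ c.verts, T.p v = T.p e ∧ T.p e < v ∧ v < e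

/-- A cell is critical (for the Morse matching `W`) if it has no unblocked vertices and
no respectful edges. -/
def Critical {m n : ℕ} {T : OrderedTree m} (c : TCell m n T) : Prop :=
  (∀ v ∈ c.verts, Blocked c v) ∧ (∀ e ∈ c.edges, Disrespectful c e)

/-- A cell is redundant (in the domain of the Morse matching `W`) if it has an unblocked
vertex which occurs, in the order, before all of the respectful edges of the cell. -/
def Redundant {m n : ℕ} {T : OrderedTree m} (c : TCell m n T) : Prop :=
  ∃ v ∈ c.verts, ¬ Blocked c v ∧ ∀ e ∈ c.edges, ¬ Disrespectful c e → v < e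

/-- `v` lies on (the closure of) one of the edges in `E`. -/
def OnEdges {m : ℕ} (T : OrderedTree m) (E : Finset (Fin (m + 1))) (v : Fin (m + 1)) : Prop :=
  ∃ e ∈ E, v = e ∨ v = T.p e

/-- Two vertices lie in the same connected component of `T` minus the closed edges
recorded in `E`. -/
def ReachOff {m : ℕ} (T : OrderedTree m) (E : Finset (Fin (m + 1))) (u w : Fin (m + 1)) : Prop :=
  Relation.ReflTransGen
    (fun a b => ¬ OnEdges T E a ∧ ¬ OnEdges T E b ∧
      ((a ≠ 0 ∧ b = T.p a) ∨ (b ≠ 0 ∧ a = T.p b))) u w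

/-- Two cells are equivalent if they have the same edge set and equal numbers of vertices
in each connected component of `T` minus the edges. -/
def TCellEquiv {m n : ℕ} {T : OrderedTree m} (c c' : TCell m n T) : Prop :=
  c.edges = c'.edges ∧ ∀ w : Fin (m + 1),
    (c.verts.filter fun v => ReachOff T c.edges v w).card =
    (c'.verts.filter fun v => ReachOff T c'.edges v w).card

/-- `c'` is a face of `c`: it is obtained by replacing some edges of `c` by one of their
endpoints. -/
def TIsFace {m n : ℕ} {T : OrderedTree m} (c' c : TCell m n T) : Prop :=
  c'.edges ⊆ c.edges ∧ c.verts ⊆ c'.verts ∧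
    ∀ v ∈ c'.verts, v ∉ c.verts → ∃ e ∈ c.edges, e ∉ c'.edges ∧ (v = e ∨ v = T.p e)

/-- The face-induced partial order on equivalence classes of cells. -/
def TClassLe {m n : ℕ} {T : OrderedTree m} (c c₁ : TCell m n T) : Prop :=
  ∃ d d₁ : TCell m n T, TCellEquiv d c ∧ TCellEquiv d₁ c₁ ∧ TIsFace d d₁

/-! Sliding an unblocked vertex to its parent stays inside its component of `T`
minus the edges, so every class contains a cell all of whose vertices are blocked. Take such a
representative `r` of `[c']`. An edge `e` of `r` is an edge of `c`, hence disrespectful there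
through a vertex `v` of `c` with `p v = p e`. The component of `v` in `T` minus the edges of
`c` is occupied, and passing to a face only merges components, so some vertex of `r` lies in
the component of `v` in `T` minus the edges of `r`. That component lies below `v`, and walking
up from a vertex of `r`, blockedness forces every parent on the way to be a vertex of `r`;
hence `v` itself is a vertex of `r`, making `e` disrespectful in `r`. -/

namespace OrderedTree

variable {m : ℕ} (T : OrderedTree m)

lemma parent_le (a : Fin (m + 1)) : T.p a ≤ a := by
  rcases eq_or_ne a 0 with rfl | ha
  · rw [T.root_fix]
  · exact (T.parent_lt a ha).le

lemma iterate_parent_le (k : ℕ) (a : Fin (m + 1)) : T.p^[k] a ≤ a := by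
  induction k generalizing a with
  | zero => exact le_rfl
  | succ k ih => exact (ih (T.p a)).trans (T.parent_le a)

end OrderedTree

section Desc

variable {m : ℕ}

lemma desc_refl (p : Fin (m + 1) → Fin (m + 1)) (a : Fin (m + 1)) : Desc p a a := ⟨0, rfl⟩

lemma Desc.of_parent {p : Fin (m + 1) → Fin (m + 1)} {a b : Fin (m + 1)}
    (h : Desc p (p a) b) : Desc p a b :=
  let ⟨k, hk⟩ := h; ⟨k + 1, hk⟩

lemma Desc.parent_of_ne {p : Fin (m + 1) → Fin (m + 1)} {a b : Fin (m + 1)}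
    (h : Desc p a b) (hab : a ≠ b) : Desc p (p a) b := by
  obtain ⟨_ | k, hk⟩ := h
  · exact absurd hk hab
  · exact ⟨k, hk⟩

lemma Desc.le {T : OrderedTree m} {a b : Fin (m + 1)} (h : Desc T.p a b) : b ≤ a :=
  let ⟨k, hk⟩ := h; hk ▸ T.iterate_parent_le k a

end Desc

section ReachOff

variable {m : ℕ} {T : OrderedTree m} {E : Finset (Fin (m + 1))}

lemma OnEdges.mono {E' : Finset (Fin (m + 1))} (hE : E ⊆ E') {a : Fin (m + 1)}
    (h : OnEdges T E a) : OnEdges T E' a :=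
  let ⟨e, he, hae⟩ := h; ⟨e, hE he, hae⟩

lemma ReachOff.anti {E' : Finset (Fin (m + 1))} (hE : E ⊆ E') {u w : Fin (m + 1)}
    (h : ReachOff T E' u w) : ReachOff T E u w :=
  Relation.ReflTransGen.mono
    (fun _ _ hab => ⟨mt (OnEdges.mono hE) hab.1, mt (OnEdges.mono hE) hab.2.1, hab.2.2⟩) _ _ h

lemma ReachOff.symm {u w : Fin (m + 1)} (h : ReachOff T E u w) : ReachOff T E w u := by
  induction h with
  | refl => exact .refl
  | tail _ hab ih => exact .head ⟨hab.2.1, hab.1, hab.2.2.symm⟩ ih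

lemma reachOff_parent {v : Fin (m + 1)} (hv0 : v ≠ 0) (hv : ¬ OnEdges T E v)
    (hpv : ¬ OnEdges T E (T.p v)) : ReachOff T E v (T.p v) :=
  .single ⟨hv, hpv, .inl ⟨hv0, rfl⟩⟩

/-- A component of `T` minus the edges `E` that meets the subtree below `x` stays in it, as
soon as the edge `[p x, x]` touches `E`. -/
lemma Desc.of_reachOff {x a b : Fin (m + 1)} (hx : OnEdges T E x ∨ OnEdges T E (T.p x))
    (ha : Desc T.p a x) (h : ReachOff T E a b) : Desc T.p b x := by
  induction h with
  | refl => exact ha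
  | @tail b c _ hstep ih =>
    obtain ⟨hb, hc, ⟨-, rfl⟩ | ⟨-, rfl⟩⟩ := hstep
    · by_cases hbx : b = x
      · subst hbx; exact (hx.elim hb hc).elim
      · exact ih.parent_of_ne hbx
    · exact ih.of_parent

lemma desc_of_reachOff {u v : Fin (m + 1)} (hpv : OnEdges T E (T.p v))
    (h : ReachOff T E u v) : Desc T.p u v :=
  (desc_refl T.p v).of_reachOff (.inr hpv) h.symm

end ReachOff

lemma Finset.card_filter_insert_erase {α : Type*} [DecidableEq α] {s : Finset α} {a b : α}
    (P : α → Prop) [DecidablePred P] (ha : a ∈ s) (hb : b ∉ s) (hab : P a ↔ P b) :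
    ((insert b (s.erase a)).filter P).card = (s.filter P).card := by
  rw [Finset.filter_insert, Finset.filter_erase]
  by_cases hPb : P b
  · rw [if_pos hPb, Finset.card_insert_of_notMem
      (fun h => hb (Finset.mem_of_mem_filter _ (Finset.mem_of_mem_erase h))),
      Finset.card_erase_add_one (Finset.mem_filter.2 ⟨ha, hab.2 hPb⟩)]
  · rw [if_neg hPb, Finset.erase_eq_of_notMem (fun h => hPb (hab.1 (Finset.mem_filter.1 h).2))]

namespace TCellEquiv

variable {m n : ℕ} {T : OrderedTree m}

lemma refl (c : TCell m n T) : TCellEquiv c c := ⟨rfl, fun _ => rfl⟩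

lemma symm {c d : TCell m n T} (h : TCellEquiv c d) : TCellEquiv d c :=
  ⟨h.1.symm, fun w => (h.2 w).symm⟩

lemma trans {c d f : TCell m n T} (h : TCellEquiv c d) (h' : TCellEquiv d f) :
    TCellEquiv c f :=
  ⟨h.1.trans h'.1, fun w => (h.2 w).trans (h'.2 w)⟩

lemma exists_reachOff {c d : TCell m n T} (h : TCellEquiv c d) {w : Fin (m + 1)}
    (hc : ∃ u ∈ c.verts, ReachOff T c.edges u w) :
    ∃ u ∈ d.verts, ReachOff T d.edges u w := by
  simpa only [← Finset.filter_nonempty_iff, ← Finset.card_pos, h.2 w] using hc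

end TCellEquiv

lemma TIsFace.exists_reachOff {m n : ℕ} {T : OrderedTree m} {c d : TCell m n T}
    (h : TIsFace c d) {w : Fin (m + 1)} (hd : ∃ u ∈ d.verts, ReachOff T d.edges u w) :
    ∃ u ∈ c.verts, ReachOff T c.edges u w :=
  let ⟨u, hu, hr⟩ := hd; ⟨u, h.2.1 hu, hr.anti h.1⟩

namespace TCell

variable {m n : ℕ} {T : OrderedTree m}

lemma not_onEdges_of_mem_verts (c : TCell m n T) {u : Fin (m + 1)} (hu : u ∈ c.verts) :
    ¬ OnEdges T c.edges u := by
  rintro ⟨e, he, h | h⟩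
  exacts [(c.vert_not_on_edge e he u hu).1 h, (c.vert_not_on_edge e he u hu).2 h]

lemma blocked_iff (c : TCell m n T) (v : Fin (m + 1)) :
    Blocked c v ↔ v = 0 ∨ T.p v ∈ c.verts ∨ OnEdges T c.edges (T.p v) := by
  simp only [Blocked, OnEdges]
  constructor
  · rintro (h | h | h | ⟨e, he, hpe⟩)
    exacts [.inl h, .inr (.inl h), .inr (.inr ⟨_, h, .inl rfl⟩),
      .inr (.inr ⟨e, he, .inr hpe.symm⟩)]
  · rintro (h | h | ⟨e, he, hpe | hpe⟩)
    exacts [.inl h, .inr (.inl h), .inr (.inr (.inl (hpe ▸ he))),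
      .inr (.inr (.inr ⟨e, he, hpe.symm⟩))]

/-- Walking up from a vertex of `c` towards `v`, blockedness keeps every parent a vertex of
`c`: the parent cannot lie on an edge, as the component of `v` lies below `v`. -/
lemma mem_verts_of_reachOff {c : TCell m n T} (hb : ∀ x ∈ c.verts, Blocked c x)
    {v : Fin (m + 1)} (hpv : OnEdges T c.edges (T.p v)) (hv : ¬ OnEdges T c.edges v)
    {u : Fin (m + 1)} (hu : u ∈ c.verts) (hr : ReachOff T c.edges u v) : v ∈ c.verts := by
  induction u using WellFoundedLT.induction with
  | _ u ih =>
  by_cases huv : u = v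
  · exact huv ▸ hu
  have hdesc : Desc T.p (T.p u) v := (desc_of_reachOff hpv hr).parent_of_ne huv
  have hu0 : u ≠ 0 := by
    rintro rfl
    rw [T.root_fix] at hdesc
    obtain rfl := Fin.le_zero_iff.1 hdesc.le
    exact hv (T.root_fix ▸ hpv)
  rcases (c.blocked_iff u).1 (hb u hu) with hu0' | hpu | hpu
  · exact absurd hu0' hu0
  · exact ih _ (T.parent_lt u hu0) hpu
      ((reachOff_parent hu0 (c.not_onEdges_of_mem_verts hu)
        (c.not_onEdges_of_mem_verts hpu)).symm.trans hr)
  · have hvu : Desc T.p v (T.p u) := Desc.of_reachOff (a := u) (.inl hpu) ⟨1, rfl⟩ hr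
    exact absurd (le_antisymm hvu.le hdesc.le ▸ hpu) hv

def slide (c : TCell m n T) {v : Fin (m + 1)} (hv : v ∈ c.verts) (hpv : T.p v ∉ c.verts)
    (hpE : ¬ OnEdges T c.edges (T.p v)) : TCell m n T where
  edges := c.edges
  verts := insert (T.p v) (c.verts.erase v)
  edges_ne_root := c.edges_ne_root
  card_eq := by
    rw [Finset.card_insert_of_notMem (fun h => hpv (Finset.mem_of_mem_erase h)),
      Finset.card_erase_add_one hv, c.card_eq]
  vert_not_on_edge e he w hw := by
    rcases Finset.mem_insert.1 hw with rfl | hw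
    · exact ⟨fun h => hpE ⟨e, he, .inl h⟩, fun h => hpE ⟨e, he, .inr h⟩⟩
    · exact c.vert_not_on_edge e he w (Finset.mem_of_mem_erase hw)
  edges_disjoint := c.edges_disjoint

lemma equiv_slide (c : TCell m n T) {v : Fin (m + 1)} (hv : v ∈ c.verts) (hv0 : v ≠ 0)
    (hpv : T.p v ∉ c.verts) (hpE : ¬ OnEdges T c.edges (T.p v)) :
    TCellEquiv c (c.slide hv hpv hpE) := by
  have hstep := reachOff_parent hv0 (c.not_onEdges_of_mem_verts hv) hpE
  refine ⟨rfl, fun w => (Finset.card_filter_insert_erase _ hv hpv ?_).symm⟩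
  exact ⟨hstep.symm.trans, hstep.trans⟩

lemma sum_verts_slide_lt (c : TCell m n T) {v : Fin (m + 1)} (hv : v ∈ c.verts) (hv0 : v ≠ 0)
    (hpv : T.p v ∉ c.verts) (hpE : ¬ OnEdges T c.edges (T.p v)) :
    ∑ x ∈ (c.slide hv hpv hpE).verts, x.val < ∑ x ∈ c.verts, x.val := by
  rw [slide, Finset.sum_insert (fun h => hpv (Finset.mem_of_mem_erase h)),
    ← Finset.add_sum_erase _ _ hv]
  exact Nat.add_lt_add_right (T.parent_lt v hv0) _

/-- A cell with the least vertex sum among the cells equivalent to `c` with the same edges has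
only blocked vertices, since a slide would lower the sum. -/
lemma exists_equiv_forall_blocked (c : TCell m n T) :
    ∃ r : TCell m n T,
      r.edges = c.edges ∧ TCellEquiv c r ∧ ∀ x ∈ r.verts, Blocked r x := by
  obtain ⟨r, ⟨hrE, hcr⟩, hmin⟩ :=
    (measure fun r : TCell m n T => ∑ x ∈ r.verts, x.val).wf.has_min
      {r | r.edges = c.edges ∧ TCellEquiv c r} ⟨c, rfl, .refl c⟩
  refine ⟨r, hrE, hcr, fun v hv => ?_⟩
  by_contra hnb
  simp only [blocked_iff, not_or] at hnb
  obtain ⟨hv0, hpv, hpE⟩ := hnb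
  exact hmin (r.slide hv hpv hpE) ⟨hrE, hcr.trans (r.equiv_slide hv hv0 hpv hpE)⟩
    (r.sum_verts_slide_lt hv hv0 hpv hpE)

end TCell

/-- If `c` is a critical cell of `UD^n(T)` and `[c'] ≤ [c]` in the face-induced partial
order on equivalence classes, then `c'` is equivalent to some critical cell. -/
theorem equiv_critical_of_classLe_critical (m n : ℕ) (T : OrderedTree m)
    (c c' : TCell m n T) (hc : Critical c) (hle : TClassLe c' c) :
    ∃ d : TCell m n T, Critical d ∧ TCellEquiv c' d := by
  obtain ⟨d, d₁, hd, hd₁, hface⟩ := hle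
  obtain ⟨r, hrE, hdr, hrb⟩ := d.exists_equiv_forall_blocked
  have hrc : r.edges ⊆ c.edges := hrE ▸ hd₁.1 ▸ hface.1
  refine ⟨r, ⟨hrb, fun e he => ?_⟩, hd.symm.trans hdr⟩
  obtain ⟨v, hvc, hpv, hlt⟩ := hc.2 e (hrc he)
  obtain ⟨u, hu, hur⟩ : ∃ u ∈ r.verts, ReachOff T r.edges u v :=
    hdr.exists_reachOff (hface.exists_reachOff (hd₁.symm.exists_reachOff ⟨v, hvc, .refl⟩))
  have hvr : v ∈ r.verts := TCell.mem_verts_of_reachOff hrb ⟨e, he, .inr hpv⟩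
    (mt (OnEdges.mono hrc) (c.not_onEdges_of_mem_verts hvc)) hu hur
  exact ⟨v, hvr, hpv, hlt⟩
end

section
/- Let T_min be the tree with four essential vertices arranged so that a central vertex of degree 3 joins three paths, each ending at a degree-3 vertex carrying two additional arms of length 3 (the minimal nonlinear tree, sufficiently subdivided for 4 strands). Then the number of critical 2-cells of UD^4(T_min) with respect to the Morse matching is exactly 6, and there are no critical cells of dimension ≥ 3. -/
attribute [local instance] Classical.propDecidable

/-- The parent function of the minimal nonlinear tree `T_min`, sufficiently subdivided for
4 strands, with its depth-first vertex order: the root is `0`; the essential vertices are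
`3, 9, 12, 21`; the central essential vertex `9` joins three paths ending at the
peripheral essential vertices `3`, `12` and `21`, each of which carries two further arms
of length 3. -/
def pTmin : Fin 28 → Fin 28 := fun v =>
  if v = 0 then 0
  else if v = 7 then 3
  else if v = 10 then 9
  else if v = 13 then 12
  else if v = 16 then 12
  else if v = 19 then 9
  else if v = 22 then 21
  else if v = 25 then 21
  else v - 1

-- auxiliary
abbrev specialE : Finset (Fin 28) := {7, 16, 19, 25}
abbrev sixSets : Finset (Finset (Fin 28)) := {{7,16},{7,19},{7,25},{16,19},{16,25},{19,25}}
def comp : Fin 28 → Fin 28 := fun e => if e = 7 then 4 else if e = 16 then 13 else if e = 19 then 10 else 22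

theorem L1 : ∀ v e : Fin 28, pTmin v = pTmin e → pTmin e < v → v < e →
    e ∈ specialE ∧ v = comp e := by decide
theorem L2 : ∀ e ∈ specialE, ∀ e' ∈ specialE, e ≠ e' → e ≠ pTmin e' ∧ pTmin e ≠ pTmin e' := by decide
theorem L3 : ∀ e ∈ specialE, ∀ e' ∈ specialE, comp e ≠ e' ∧ comp e ≠ pTmin e' := by decide
theorem L4 : ∀ e ∈ specialE, pTmin (comp e) = pTmin e ∧ pTmin e < comp e ∧ comp e < e ∧ e ≠ 0 := by decide
theorem L5 : ∀ e ∈ specialE, ∀ e' ∈ specialE, comp e = comp e' → e = e' := by decide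
theorem L6 : ∀ a b : Fin 28, a ∈ specialE → b ∈ specialE → a ≠ b →
    ({a, b} : Finset (Fin 28)) ∈ sixSets := by
  intro a b ha hb hab
  fin_cases ha <;> fin_cases hb <;>
    first
      | exact absurd rfl hab
      | decide
theorem L7 : ∀ s ∈ sixSets, s ⊆ specialE ∧ s.card = 2 := by
  intro s hs
  fin_cases hs <;> exact ⟨by decide, by decide⟩

theorem TCell.ext'' {m n : ℕ} {T : OrderedTree m} {c c' : TCell m n T}
    (h1 : c.edges = c'.edges) (h2 : c.verts = c'.verts) : c = c' := by
  cases c; cases c'; simp_all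

/-- the standard critical 2-cell on edge set `s` -/
def mkC (T : OrderedTree 27) (hT : T.p = pTmin) (s : Finset (Fin 28))
    (hs : s ⊆ specialE) (hc : s.card = 2) : TCell 27 4 T where
  edges := s
  verts := s.image comp
  edges_ne_root e he := (L4 e (hs he)).2.2.2
  card_eq := by
    rw [Finset.card_image_of_injOn fun a ha b hb h => L5 a (hs ha) b (hs hb) h, hc]
  vert_not_on_edge := by
    intro e he v hv
    obtain ⟨e', he', rfl⟩ := Finset.mem_image.mp hv
    rw [hT]
    exact L3 e' (hs he') e (hs he)
  edges_disjoint := by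
    intro e he e' he' hne
    rw [hT]
    exact L2 e (hs he) e' (hs he') hne

theorem mkC_mem (T : OrderedTree 27) (hT : T.p = pTmin) (s : Finset (Fin 28))
    (hs : s ⊆ specialE) (hc : s.card = 2) :
    Critical (mkC T hT s hs hc) ∧ (mkC T hT s hs hc).edges.card = 2 := by
  refine ⟨⟨?_, ?_⟩, hc⟩
  · intro v hv
    obtain ⟨e, he, rfl⟩ := Finset.mem_image.mp hv
    exact Or.inr (Or.inr (Or.inr ⟨e, he, by rw [hT]; exact (L4 e (hs he)).1.symm⟩))
  · intro e he
    refine ⟨comp e, Finset.mem_image_of_mem comp he, ?_⟩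
    rw [hT]
    exact ⟨(L4 e (hs he)).1, (L4 e (hs he)).2.1, (L4 e (hs he)).2.2.1⟩

/-- any critical cell has edges inside `specialE` and the companion vertices present -/
theorem crit_edges {T : OrderedTree 27} (hT : T.p = pTmin) (c : TCell 27 4 T)
    (hcr : Critical c) : c.edges ⊆ specialE ∧ ∀ e ∈ c.edges, comp e ∈ c.verts := by
  have key : ∀ e ∈ c.edges, e ∈ specialE ∧ comp e ∈ c.verts := by
    intro e he
    obtain ⟨v, hv, hpv, h1, h2⟩ := hcr.2 e he
    rw [hT] at hpv h1
    obtain ⟨hsp, rfl⟩ := L1 v e hpv h1 h2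
    exact ⟨hsp, hv⟩
  exact ⟨fun e he => (key e he).1, fun e he => (key e he).2⟩

theorem crit_card_le {T : OrderedTree 27} (hT : T.p = pTmin) (c : TCell 27 4 T)
    (hcr : Critical c) : c.edges.card ≤ 2 := by
  obtain ⟨hs, hcomp⟩ := crit_edges hT c hcr
  have himg : c.edges.image comp ⊆ c.verts := by
    intro v hv
    obtain ⟨e, he, rfl⟩ := Finset.mem_image.mp hv
    exact hcomp e he
  have h1 : (c.edges.image comp).card = c.edges.card :=
    Finset.card_image_of_injOn fun a ha b hb h => L5 a (hs ha) b (hs hb) h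
  have h2 := Finset.card_le_card himg
  have h3 := c.card_eq
  omega

theorem crit_eq_mkC {T : OrderedTree 27} (hT : T.p = pTmin) (c : TCell 27 4 T)
    (hcr : Critical c) (h2 : c.edges.card = 2) :
    c.verts = c.edges.image comp := by
  obtain ⟨hs, hcomp⟩ := crit_edges hT c hcr
  have himg : c.edges.image comp ⊆ c.verts := by
    intro v hv
    obtain ⟨e, he, rfl⟩ := Finset.mem_image.mp hv
    exact hcomp e he
  have h1 : (c.edges.image comp).card = c.edges.card :=
    Finset.card_image_of_injOn fun a ha b hb h => L5 a (hs ha) b (hs hb) h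
  have h3 := c.card_eq
  exact (Finset.eq_of_subset_of_card_le himg (by omega)).symm

/-- `UD^4(T_min)` has exactly 6 critical 2-cells, and no critical cells of dimension
at least 3. -/
theorem critical_cells_of_Tmin_dim_two (T : OrderedTree 27) (hT : T.p = pTmin) :
    {c : TCell 27 4 T | Critical c ∧ c.edges.card = 2}.ncard = 6 ∧
    ∀ c : TCell 27 4 T, Critical c → c.edges.card ≤ 2 := by
  refine ⟨?_, fun c hc => crit_card_le hT c hc⟩
  set S := {c : TCell 27 4 T | Critical c ∧ c.edges.card = 2} with hS
  have hinj : Set.InjOn (fun c : TCell 27 4 T => c.edges) S := by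
    intro c hc c' hc' h
    simp only at h
    exact TCell.ext'' h (by
      rw [crit_eq_mkC hT c hc.1 hc.2, crit_eq_mkC hT c' hc'.1 hc'.2, h])
  have himg : (fun c : TCell 27 4 T => c.edges) '' S = ↑sixSets := by
    ext s
    simp only [Set.mem_image, Finset.coe_sort_coe, Finset.mem_coe]
    constructor
    · rintro ⟨c, hc, rfl⟩
      have := (crit_edges hT c hc.1).1
      obtain ⟨a, b, hab, hab2⟩ := Finset.card_eq_two.mp hc.2
      rw [hab2]
      rw [hab2] at this
      exact L6 a b (this (by simp)) (this (by simp)) hab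
    · intro hs
      obtain ⟨hsub, hcard⟩ := L7 s hs
      exact ⟨mkC T hT s hsub hcard, mkC_mem T hT s hsub hcard, rfl⟩
  have := Set.ncard_image_of_injOn hinj
  rw [himg, Set.ncard_coe_finset] at this
  rw [← this]
  decide
end
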